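/- For the bundle ρ : ℝ³ → ℝ², ρ(x,y,z) = (x,y), with the flat connection (horizontal lifts keep z constant) and R^A = ℝ³ \ {(t,0,0) : t ∈ ℝ}: the horizontal extension of ¬R at the point (0,0,0) over the base equals the x-axis {(t,0) : t ∈ ℝ}, which is not open in ℝ²; and the horizontal extension of R at (0,0,0) is empty. -/
import Mathlib


/-- `R^A = ℝ³ \ {(t,0,0)}` in the bundle `ρ : ℝ³ → ℝ²`, `ρ(x,y,z) = (x,y)`. -/
def RA : Set (ℝ × ℝ × ℝ) := {p | ¬ (p.2.1 = 0 ∧ p.2.2 = 0)}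

/-- with the flat connection (horizontal lifts keep `z` constant,
so the lift of a base path `σ` starting at `(0,0,0)` is `s ↦ ((σ s).1, (σ s).2, 0)`):
the horizontal extension of `¬R` at `(0,0,0)` — points reachable by a path from
`(0,0)` whose transported points avoid `R^A` on a neighborhood of every time —
equals the x-axis `{(t,0)}`, which is not open in `ℝ²`; and the horizontal
extension of `R` at `(0,0,0)` is empty. -/
theorem horizontal_extension_not_open_and_empty :
    ({u : ℝ × ℝ | ∃ σ : ℝ → ℝ × ℝ, Continuous σ ∧ σ 0 = (0, 0) ∧ σ 1 = u ∧
        ∀ t ∈ Set.Icc (0 : ℝ) 1, ∃ V : Set ℝ, IsOpen V ∧ t ∈ V ∧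
          ∀ s ∈ V ∩ Set.Icc (0 : ℝ) 1, (((σ s).1, (σ s).2, 0) : ℝ × ℝ × ℝ) ∉ RA}
      = {p : ℝ × ℝ | p.2 = 0}) ∧
    ¬ IsOpen {p : ℝ × ℝ | p.2 = 0} ∧
    ({u : ℝ × ℝ | ∃ σ : ℝ → ℝ × ℝ, Continuous σ ∧ σ 0 = (0, 0) ∧ σ 1 = u ∧
        ∀ t ∈ Set.Icc (0 : ℝ) 1, ∃ V : Set ℝ, IsOpen V ∧ t ∈ V ∧
          ∀ s ∈ V ∩ Set.Icc (0 : ℝ) 1, (((σ s).1, (σ s).2, 0) : ℝ × ℝ × ℝ) ∈ RA}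
      = (∅ : Set (ℝ × ℝ))) := by
  refine ⟨?_, ?_, ?_⟩
  · ext u
    simp only [Set.mem_setOf_eq]
    constructor
    · rintro ⟨σ, hc, h0, h1, h⟩
      obtain ⟨V, hVopen, hV1, hall⟩ := h 1 (by norm_num)
      have := hall 1 ⟨hV1, by norm_num⟩
      simp only [RA, Set.mem_setOf_eq, not_not] at this
      rw [← h1]; exact this.1
    · intro hu
      refine ⟨fun s => (s * u.1, 0), by continuity, by simp, ?_, ?_⟩
      · rw [show u = (u.1, u.2) from rfl, hu]; simp
      · intro t _
        refine ⟨Set.univ, isOpen_univ, trivial, ?_⟩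
        intro s _
        simp [RA]
  · intro h
    rw [Metric.isOpen_iff] at h
    obtain ⟨ε, hε, hball⟩ := h (0, 0) (by simp)
    have hmem : ((0 : ℝ), ε / 2) ∈ Metric.ball ((0 : ℝ), (0 : ℝ)) ε := by
      rw [Metric.mem_ball, Prod.dist_eq]
      simp only [dist_self, Real.dist_eq, sub_zero]
      rw [abs_of_pos (half_pos hε)]
      simp [lt_max_iff]; linarith
    have := hball hmem
    simp only [Set.mem_setOf_eq] at this
    linarith
  · ext u
    simp only [Set.mem_setOf_eq, Set.mem_empty_iff_false, iff_false]
    rintro ⟨σ, hc, h0, h1, h⟩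
    obtain ⟨V, hVopen, hV0, hall⟩ := h 0 (by norm_num)
    have := hall 0 ⟨hV0, by norm_num⟩
    rw [h0] at this
    simp [RA] at this
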